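/- The fibers of the coarse graining map π₁ are exactly the orbits of the action F: for all A', A'' ∈ G⁸, π₁(A') = π₁(A'') if and only if there exists ν ∈ G⁴ with A'' = F_ν(A'). -/
import Mathlib


/-- The coarse graining map `π₁ : G⁸ → G⁴`. -/
def coarse₁ {G : Type*} [Group G] :
    G × G × G × G × G × G × G × G → G × G × G × G :=
  fun (g₁, g₂, _g₃, _g₄, g₅, g₆, g₇, g₈) => (g₁, g₂, g₅, g₈ * g₇⁻¹ * g₆)

/-- The family of maps `F_ν : G⁸ → G⁸` for `ν = (ν₃,ν₄,ν_c,ν_e) ∈ G⁴`. -/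
def Fmap {G : Type*} [Group G] :
    G × G × G × G → (G × G × G × G × G × G × G × G) → G × G × G × G × G × G × G × G :=
  fun (ν₃, ν₄, νc, νe) (g₁, g₂, g₃, g₄, g₅, g₆, g₇, g₈) =>
    (g₁, g₂, νc * g₃ * ν₃⁻¹, νe * g₄ * ν₄⁻¹, g₅, νc * g₆, νc * g₇ * νe⁻¹, g₈ * νe⁻¹)

/-- The fibers of the coarse graining map `π₁` are exactly the orbits of the
action `F`: for all `A', A'' ∈ G⁸`, `π₁(A') = π₁(A'')` if and only if there is
`ν ∈ G⁴` with `A'' = F_ν(A')`. -/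
theorem coarse₁_fibers_eq_orbits {G : Type*} [Group G]
    (A' A'' : G × G × G × G × G × G × G × G) :
    coarse₁ A' = coarse₁ A'' ↔ ∃ ν : G × G × G × G, A'' = Fmap ν A' := by
  obtain ⟨g₁, g₂, g₃, g₄, g₅, g₆, g₇, g₈⟩ := A'
  obtain ⟨h₁, h₂, h₃, h₄, h₅, h₆, h₇, h₈⟩ := A''
  simp only [coarse₁, Fmap, Prod.mk.injEq, Prod.ext_iff]
  constructor
  · rintro ⟨rfl, rfl, rfl, hinv⟩
    refine ⟨(h₃⁻¹ * (h₆ * g₆⁻¹) * g₃, h₄⁻¹ * (h₈⁻¹ * g₈) * g₄, h₆ * g₆⁻¹, h₈⁻¹ * g₈),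
      rfl, rfl, by group, by group, rfl, by group, ?_, by group⟩
    have : h₇ = h₆ * (g₈ * g₇⁻¹ * g₆)⁻¹ * h₈ := by rw [hinv]; group
    rw [this]; group
  · rintro ⟨⟨ν₃, ν₄, νc, νe⟩, rfl, rfl, h3, h4, rfl, rfl, rfl, rfl⟩
    refine ⟨rfl, rfl, rfl, by group⟩
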